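/- Let (Ω, 𝓕, μₚ) be a probability space, W : Ω → ℝ a nonnegative bounded measurable function with ∫ W dμₚ = 1, R : Ω → ℝ measurable and bounded, and c > 0. Let g₁, …, g_m be pairwise disjoint measurable subsets of Ω covering Ω, each satisfying ∫_{g_j} min(W, c) dμₚ > 0. Let Z : ℕ → Ω' → Ω be an i.i.d. sequence on a probability space (Ω', μ') with common law μₚ. Then almost surely under μ', the piecewise-normalised capped importance sampling estimator converges: ∑_{j=1}^m ( #{i < n : Z_i ∈ g_j} / n ) · ( ∑_{i < n, Z_i ∈ g_j} min(W(Z_i), c)·R(Z_i) ) / ( ∑_{i < n, Z_i ∈ g_j} min(W(Z_i), c) ) → ∑_{j=1}^m μₚ(g_j) · ( ∫_{g_j} min(W, c)·R dμₚ ) / ( ∫_{g_j} min(W, c) dμₚ ) as n → ∞. -/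

import Mathlib

/-!
In group `g j`, the frequency of `g j` and the averages of `min W c` and `min W c * R` restricted
to `g j` are sample means of bounded functions of the i.i.d. sequence `Z`, so by the strong law
they converge almost surely to the corresponding `μₚ`-integrals. The NCIS ratio is the quotient of
the last two averages (the factors `1 / n` cancel), whose limit denominator is positive, so the
estimator converges by continuity of the finitely many products and quotients.
-/

open MeasureTheory Filter ProbabilityTheory

section StrongLaw

variable {Ω Ω' : Type*} [MeasurableSpace Ω] [MeasurableSpace Ω'] {μₚ : Measure Ω} {μ' : Measure Ω'}
  {Z : ℕ → Ω' → Ω}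

theorem strong_law_ae_comp (hZ_meas : ∀ i, Measurable (Z i)) (hZ_indep : iIndepFun Z μ')
    (hZ_law : ∀ i, Measure.map (Z i) μ' = μₚ) {f : Ω → ℝ} (hf_meas : Measurable f)
    (hf_int : Integrable f μₚ) :
    ∀ᵐ ω' ∂μ', Tendsto (fun n : ℕ => (∑ i ∈ Finset.range n, f (Z i ω')) / n)
      atTop (nhds (∫ ω, f ω ∂μₚ)) := by
  have hint : Integrable (f ∘ Z 0) μ' := by
    rw [← hZ_law 0] at hf_int
    exact hf_int.comp_measurable (hZ_meas 0)
  have hindep : Pairwise (Function.onFun (IndepFun · · μ') fun i => f ∘ Z i) :=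
    fun i j hij => (hZ_indep.indepFun hij).comp hf_meas hf_meas
  have hident (i : ℕ) : IdentDistrib (f ∘ Z i) (f ∘ Z 0) μ' μ' :=
    IdentDistrib.comp ⟨(hZ_meas i).aemeasurable, (hZ_meas 0).aemeasurable,
      by rw [hZ_law, hZ_law]⟩ hf_meas
  have hmean : ∫ ω', (f ∘ Z 0) ω' ∂μ' = ∫ ω, f ω ∂μₚ := by
    rw [← hZ_law 0, integral_map (hZ_meas 0).aemeasurable hf_meas.aestronglyMeasurable]
    rfl
  rw [← hmean]
  exact strong_law_ae_real (fun i => f ∘ Z i) hint hindep hident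

theorem strong_law_ae_indicator_comp (hZ_meas : ∀ i, Measurable (Z i))
    (hZ_indep : iIndepFun Z μ') (hZ_law : ∀ i, Measure.map (Z i) μ' = μₚ) {f : Ω → ℝ}
    (hf_meas : Measurable f) (hf_int : Integrable f μₚ) {s : Set Ω} (hs : MeasurableSet s) :
    ∀ᵐ ω' ∂μ', Tendsto (fun n : ℕ => (∑ i ∈ Finset.range n, s.indicator f (Z i ω')) / n)
      atTop (nhds (∫ ω in s, f ω ∂μₚ)) := by
  simpa only [integral_indicator hs] using
    strong_law_ae_comp hZ_meas hZ_indep hZ_law (hf_meas.indicator hs) (hf_int.indicator hs)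

end StrongLaw

theorem tendsto_div_of_tendsto_div_natCast {a b : ℕ → ℝ} {α β : ℝ}
    (ha : Tendsto (fun n : ℕ => a n / n) atTop (nhds α))
    (hb : Tendsto (fun n : ℕ => b n / n) atTop (nhds β)) (hβ : β ≠ 0) :
    Tendsto (fun n => a n / b n) atTop (nhds (α / β)) := by
  refine (ha.div hb hβ).congr' ?_
  filter_upwards [eventually_ne_atTop 0] with n hn
  exact div_div_div_cancel_right₀ (Nat.cast_ne_zero.2 hn) (a n) (b n)

theorem piecencis_asymptotic_general
    {Ω Ω' : Type*} [MeasurableSpace Ω] [MeasurableSpace Ω']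
    (μₚ : Measure Ω) [IsProbabilityMeasure μₚ]
    (W : Ω → ℝ) (hW_meas : Measurable W) (hW_nonneg : ∀ ω, 0 ≤ W ω)
    (R : Ω → ℝ) (hR_meas : Measurable R) (CR : ℝ) (hR_bdd : ∀ ω, |R ω| ≤ CR)
    (c : ℝ) (hc : 0 < c)
    (m : ℕ) (g : Fin m → Set Ω) (hg_meas : ∀ j, MeasurableSet (g j))
    (hg_pos : ∀ j, 0 < ∫ ω in g j, min (W ω) c ∂μₚ)
    (μ' : Measure Ω') [IsProbabilityMeasure μ']
    (Z : ℕ → Ω' → Ω) (hZ_meas : ∀ i, Measurable (Z i))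
    (hZ_indep : ProbabilityTheory.iIndepFun Z μ')
    (hZ_law : ∀ i, Measure.map (Z i) μ' = μₚ) :
    ∀ᵐ ω' ∂μ', Tendsto
      (fun n : ℕ => ∑ j : Fin m,
        ((∑ i ∈ Finset.range n, Set.indicator (g j) (fun _ => (1 : ℝ)) (Z i ω')) / n) *
        ((∑ i ∈ Finset.range n,
            Set.indicator (g j) (fun z => min (W z) c * R z) (Z i ω')) /
         (∑ i ∈ Finset.range n,
            Set.indicator (g j) (fun z => min (W z) c) (Z i ω'))))
      atTop
      (nhds (∑ j : Fin m, (μₚ (g j)).toReal *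
        ((∫ ω in g j, min (W ω) c * R ω ∂μₚ) / (∫ ω in g j, min (W ω) c ∂μₚ)))) := by
  have hcap_meas : Measurable fun ω => min (W ω) c := hW_meas.min measurable_const
  have hcap_bdd (ω : Ω) : |min (W ω) c| ≤ c :=
    abs_le.2 ⟨by linarith [le_min (hW_nonneg ω) hc.le], min_le_right _ _⟩
  have hcap_int : Integrable (fun ω => min (W ω) c) μₚ :=
    .of_bound hcap_meas.aestronglyMeasurable c (ae_of_all _ hcap_bdd)
  have hcapR_int : Integrable (fun ω => min (W ω) c * R ω) μₚ :=
    .of_bound (hcap_meas.mul hR_meas).aestronglyMeasurable (c * CR) (ae_of_all _ fun ω => by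
      rw [Real.norm_eq_abs, abs_mul]
      exact mul_le_mul (hcap_bdd ω) (hR_bdd ω) (abs_nonneg _) hc.le)
  have hfreq (j : Fin m) := strong_law_ae_indicator_comp hZ_meas hZ_indep hZ_law
    measurable_const (integrable_const (1 : ℝ)) (hg_meas j)
  have hnum (j : Fin m) := strong_law_ae_indicator_comp hZ_meas hZ_indep hZ_law
    (hcap_meas.mul hR_meas) hcapR_int (hg_meas j)
  have hden (j : Fin m) := strong_law_ae_indicator_comp hZ_meas hZ_indep hZ_law
    hcap_meas hcap_int (hg_meas j)
  filter_upwards [ae_all_iff.2 hfreq, ae_all_iff.2 hnum, ae_all_iff.2 hden]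
    with ω' hfreq hnum hden
  refine tendsto_finsetSum _ fun j _ => ?_
  rw [← measureReal_def, ← setIntegral_one_eq_measureReal]
  exact (hfreq j).mul (tendsto_div_of_tendsto_div_natCast (hnum j) (hden j) (hg_pos j).ne')

/-- Almost-sure convergence of the PieceNCIS estimator: stratifying over a finite
measurable partition `g 1, …, g m` of the context space, the estimator combining the
per-group NCIS ratios weighted by the empirical group frequencies converges almost
surely to `∑ j, μₚ(g j) · (∫_{g j} min(W,c)·R dμₚ) / (∫_{g j} min(W,c) dμₚ)`. -/
theorem piecencis_asymptotic
    {Ω Ω' : Type*} [MeasurableSpace Ω] [MeasurableSpace Ω']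
    (μₚ : Measure Ω) [IsProbabilityMeasure μₚ]
    (W : Ω → ℝ) (hW_meas : Measurable W) (hW_nonneg : ∀ ω, 0 ≤ W ω)
    (hW_int : ∫ ω, W ω ∂μₚ = 1) (CW : ℝ) (hW_bdd : ∀ ω, W ω ≤ CW)
    (R : Ω → ℝ) (hR_meas : Measurable R) (CR : ℝ) (hR_bdd : ∀ ω, |R ω| ≤ CR)
    (c : ℝ) (hc : 0 < c)
    (m : ℕ) (g : Fin m → Set Ω) (hg_meas : ∀ j, MeasurableSet (g j))
    (hg_disj : Pairwise (Function.onFun Disjoint g))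
    (hg_cover : (⋃ j, g j) = Set.univ)
    (hg_pos : ∀ j, 0 < ∫ ω in g j, min (W ω) c ∂μₚ)
    (μ' : Measure Ω') [IsProbabilityMeasure μ']
    (Z : ℕ → Ω' → Ω) (hZ_meas : ∀ i, Measurable (Z i))
    (hZ_indep : ProbabilityTheory.iIndepFun Z μ')
    (hZ_law : ∀ i, Measure.map (Z i) μ' = μₚ) :
    ∀ᵐ ω' ∂μ', Tendsto
      (fun n : ℕ => ∑ j : Fin m,
        ((∑ i ∈ Finset.range n, Set.indicator (g j) (fun _ => (1 : ℝ)) (Z i ω')) / n) *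
        ((∑ i ∈ Finset.range n,
            Set.indicator (g j) (fun z => min (W z) c * R z) (Z i ω')) /
         (∑ i ∈ Finset.range n,
            Set.indicator (g j) (fun z => min (W z) c) (Z i ω'))))
      atTop
      (nhds (∑ j : Fin m, (μₚ (g j)).toReal *
        ((∫ ω in g j, min (W ω) c * R ω ∂μₚ) / (∫ ω in g j, min (W ω) c ∂μₚ)))) :=
  piecencis_asymptotic_general μₚ W hW_meas hW_nonneg R hR_meas CR hR_bdd c hc m g hg_meas hg_pos μ'
    Z hZ_meas hZ_indep hZ_law
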